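/- Let h be a complex number with exp(h) ≠ 1 and let [x] = (exp(hx/2) − exp(−hx/2))/(exp(h/2) − exp(−h/2)) for x ∈ ℂ. Let k ≥ 1 be an integer, fix two distinct indices l, p in the integer interval [−k, k], and let complex numbers L_{i,2k+1} (i ∈ [−k, k], i ≠ l, i ≠ p), L_{j,2k} (j ∈ [−k, k−1]) and L_{i,2k−1} (i ∈ [1−k, k−1]) be given such that [L_{i,2k} − L_{j,2k} + s] ≠ 0 and [L_{i,2k} − L_{j,2k} + s − 1] ≠ 0 for all i ≠ j in [−k, k−1] and s ∈ {0, 1}. Then ∑_{s=0}^{1} ∑_{j=−k}^{k−1} (−1)^s · ( ∏_{i=−k, i≠l,p}^{k} [L_{i,2k+1} − L_{j,2k} + s] · ∏_{i=1−k}^{k−1} [L_{i,2k−1} − L_{j,2k} + s] ) / ( ∏_{i≠j, i=−k}^{k−1} [L_{i,2k} − L_{j,2k} + s][L_{i,2k} − L_{j,2k} + s − 1] ) = 0. (Identity (24d).) -/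

import Mathlib

/-!
Take the `4k` nodes `y (s, j) = L_{j,2k} - s` (`s ∈ {0, 1}`) and write
`[a - b] = (e^{hb} - e^{ha}) / (e^{h(a+b)/2} (q⁻¹ - q))`.  Up to a global sign, the `(s, j)`
summand is `∏ᵢ [aᵢ - y_ν] / ∏_{ν' ≠ ν} [y_ν' - y_ν]`, where the `4k - 2` points `aᵢ` are the
`L_{i,2k+1}` and `L_{i,2k-1}`: the factor `[y (1-s, j) - y (s, j)] = [±1] = ±1` missing from the
denominator absorbs `(-1)^s`.  As there are exactly two fewer points `aᵢ` than nodes, the exponential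
prefactors combine to a constant, and the summand becomes `C · P(e^{h y_ν}) / ∏_{ν' ≠ ν}
(e^{h y_ν} - e^{h y_ν'})` with `P = ∏ᵢ (X - e^{h aᵢ})` of degree `4k - 2`.  The sum over the `4k`
distinct nodes `e^{h y_ν}` is the coefficient of `X^{4k-1}` in the Lagrange interpolant of `P`,
which is `0`.
-/

open Finset Polynomial Complex

noncomputable def qbr (h x : ℂ) : ℂ :=
  (Complex.exp (h * x / 2) - Complex.exp (-(h * x) / 2)) /
    (Complex.exp (h / 2) - Complex.exp (-h / 2))

theorem exp_half_ne_exp_neg_half {h : ℂ} (hh : exp h ≠ 1) : exp (h / 2) ≠ exp (-h / 2) := by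
  intro heq
  have : exp h = exp (h / 2) / exp (-h / 2) := by rw [← exp_sub]; ring_nf
  exact hh (by rw [this, heq, div_self (exp_ne_zero _)])

theorem qbr_sub (h a b : ℂ) :
    qbr h (a - b) = (exp (h * b) - exp (h * a)) /
      (exp (h * (a + b) / 2) * (exp (-h / 2) - exp (h / 2))) := by
  have hnum : exp (h * b) - exp (h * a) =
      -(exp (h * (a + b) / 2) * (exp (h * (a - b) / 2) - exp (-(h * (a - b)) / 2))) := by
    simp only [mul_sub, ← exp_add]
    ring_nf
  rw [qbr, hnum, ← neg_sub (exp (h / 2)), mul_neg, neg_div_neg_eq,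
    mul_div_mul_left _ _ (exp_ne_zero _)]

theorem qbr_eq_zero_of_exp_eq_one {h x : ℂ} (hx : exp (h * x) = 1) : qbr h x = 0 := by
  rw [← sub_zero x, qbr_sub, mul_zero, exp_zero, hx, sub_self, zero_div]

theorem qbr_one {h : ℂ} (hh : exp h ≠ 1) : qbr h 1 = 1 := by
  rw [qbr, mul_one]
  exact div_self (sub_ne_zero.2 (exp_half_ne_exp_neg_half hh))

theorem qbr_neg (h x : ℂ) : qbr h (-x) = -qbr h x := by
  rw [qbr, qbr, ← neg_div, neg_sub, mul_neg, neg_neg]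

theorem prod_qbr_sub {κ : Type*} (h : ℂ) (u : Finset κ) (a : κ → ℂ) (b : ℂ) :
    ∏ i ∈ u, qbr h (a i - b) = (∏ i ∈ u, (exp (h * b) - exp (h * a i))) /
      (exp (h * (∑ i ∈ u, a i + #u * b) / 2) * (exp (-h / 2) - exp (h / 2)) ^ #u) := by
  simp only [qbr_sub, prod_div_distrib, prod_mul_distrib, prod_const, ← exp_sum]
  rw [← sum_div, ← mul_sum, sum_add_distrib, sum_const, nsmul_eq_mul]

theorem Lagrange.sum_eval_div_prod_sub_eq_zero {F ι : Type*} [Field F] [DecidableEq ι]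
    {s : Finset ι} {v : ι → F} (hvs : Set.InjOn v s) {P : F[X]} (hP : P.degree < ↑(#s - 1)) :
    ∑ i ∈ s, P.eval (v i) / ∏ j ∈ s.erase i, (v i - v j) = 0 := by
  rw [← Lagrange.coeff_eq_sum hvs (hP.trans_le (by exact_mod_cast Nat.sub_le _ _)),
    coeff_eq_zero_of_degree_lt hP]

theorem injOn_exp_mul_of_qbr_ne_zero {ι : Type*} {h : ℂ} {t : Finset ι} {y : ι → ℂ}
    (hy : ∀ ν ∈ t, ∀ ν' ∈ t, ν ≠ ν' → qbr h (y ν - y ν') ≠ 0) :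
    Set.InjOn (fun ν => exp (h * y ν)) t := by
  intro ν hν ν' hν' hexp
  by_contra hne
  refine hy ν hν ν' hν' hne (qbr_eq_zero_of_exp_eq_one ?_)
  rw [mul_sub, exp_sub, div_eq_one_iff_eq (exp_ne_zero _)]
  exact hexp

theorem sum_prod_qbr_div_prod_qbr_eq_zero {ι κ : Type*} [DecidableEq ι] {h : ℂ}
    (hh : exp h ≠ 1) {t : Finset ι} {y : ι → ℂ}
    (hy : ∀ ν ∈ t, ∀ ν' ∈ t, ν ≠ ν' → qbr h (y ν - y ν') ≠ 0) {u : Finset κ} (a : κ → ℂ)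
    (hcard : #u + 2 = #t) :
    ∑ ν ∈ t, (∏ i ∈ u, qbr h (a i - y ν)) / ∏ ν' ∈ t.erase ν, qbr h (y ν' - y ν) = 0 := by
  have hD : exp (-h / 2) - exp (h / 2) ≠ 0 := sub_ne_zero.2 (exp_half_ne_exp_neg_half hh).symm
  have hw : Set.InjOn (fun ν => exp (h * y ν)) t := injOn_exp_mul_of_qbr_ne_zero hy
  have hP : (Lagrange.nodal u fun i => exp (h * a i)).degree < ↑(#t - 1) := by
    rw [Lagrange.degree_nodal]
    exact_mod_cast (by omega : #u < #t - 1)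
  have hterm : ∀ ν ∈ t, (∏ i ∈ u, qbr h (a i - y ν)) / ∏ ν' ∈ t.erase ν, qbr h (y ν' - y ν) =
      (exp (-h / 2) - exp (h / 2)) * exp (h * (∑ ν' ∈ t, y ν' - ∑ i ∈ u, a i) / 2) *
        ((Lagrange.nodal u fun i => exp (h * a i)).eval (exp (h * y ν)) /
          ∏ ν' ∈ t.erase ν, (exp (h * y ν) - exp (h * y ν'))) := by
    intro ν hν
    have hne : ∏ ν' ∈ t.erase ν, (exp (h * y ν) - exp (h * y ν')) ≠ 0 :=
      prod_ne_zero_iff.2 fun ν' hν' => sub_ne_zero.2 fun heq =>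
        ne_of_mem_erase hν' (hw (mem_of_mem_erase hν') hν heq.symm)
    have hexp : exp (h * (∑ ν' ∈ t.erase ν, y ν' + #(t.erase ν) * y ν) / 2) =
        exp (h * (∑ i ∈ u, a i + #u * y ν) / 2) *
          exp (h * (∑ ν' ∈ t, y ν' - ∑ i ∈ u, a i) / 2) := by
      rw [← exp_add, sum_erase_eq_sub hν, card_erase_of_mem hν, ← hcard]
      push_cast
      ring_nf
    rw [prod_qbr_sub, prod_qbr_sub, Lagrange.eval_nodal, hexp, card_erase_of_mem hν, ← hcard,
      show #u + 2 - 1 = #u + 1 by omega]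
    generalize exp (-h / 2) - exp (h / 2) = D at hD ⊢
    field_simp
    ring
  rw [sum_congr rfl hterm, ← mul_sum, Lagrange.sum_eval_div_prod_sub_eq_zero hw hP, mul_zero]

theorem prod_erase_range_two_product {ι M : Type*} [DecidableEq ι] [CommMonoid M] {A : Finset ι}
    {s : ℕ} (hs : s < 2) {j : ι} (hj : j ∈ A) (f : ℕ × ι → M) :
    ∏ ν ∈ (range 2 ×ˢ A).erase (s, j), f ν =
      f (1 - s, j) * ∏ i ∈ A.erase j, f (0, i) * f (1, i) := by
  have hsplit : (range 2 ×ˢ A).erase (s, j) = insert (1 - s, j) (range 2 ×ˢ A.erase j) := by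
    ext ⟨r, i⟩
    simp only [mem_erase, mem_product, mem_range, mem_insert, Prod.mk.injEq]
    by_cases hij : i = j
    · subst hij
      simp [hj]
      omega
    · simp [hij]
  rw [hsplit, prod_insert (by simp), prod_product, prod_range_succ, prod_range_one,
    prod_mul_distrib]

theorem neg_one_pow_mul_div_prod_qbr_eq_neg_div {ι : Type*} [DecidableEq ι] {h : ℂ}
    (hh : exp h ≠ 1) {A : Finset ι} {L : ι → ℂ} {s : ℕ} (hs : s < 2) {j : ι} (hj : j ∈ A) (N : ℂ) :
    (-1) ^ s * N / ∏ i ∈ A.erase j, qbr h (L i - L j + s) * qbr h (L i - L j + s - 1) =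
      -(N / ∏ ν ∈ (range 2 ×ˢ A).erase (s, j), qbr h ((L ν.2 - ν.1) - (L j - s))) := by
  rw [prod_erase_range_two_product hs hj]
  interval_cases s
  · simp [sub_sub, add_comm, qbr_neg, qbr_one hh, div_neg]
  · simp [sub_sub_eq_add_sub, add_sub_right_comm, qbr_one hh, neg_div]

theorem qbr_sub_ne_zero_of_mem_range_two_product {ι : Type*} {h : ℂ} (hh : exp h ≠ 1)
    {A : Finset ι} {L : ι → ℂ}
    (hL : ∀ i ∈ A, ∀ j ∈ A, i ≠ j → ∀ s ∈ range 2,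
      qbr h (L i - L j + (s : ℂ)) ≠ 0 ∧ qbr h (L i - L j + (s : ℂ) - 1) ≠ 0) :
    ∀ ν ∈ range 2 ×ˢ A, ∀ ν' ∈ range 2 ×ˢ A, ν ≠ ν' →
      qbr h ((L ν.2 - ν.1) - (L ν'.2 - ν'.1)) ≠ 0 := by
  rintro ⟨r, i⟩ hν ⟨r', j⟩ hν' hne
  obtain ⟨hr, hi⟩ := mem_product.1 hν
  obtain ⟨hr', hj⟩ := mem_product.1 hν'
  rw [mem_range] at hr hr'
  by_cases hij : i = j
  · subst hij
    interval_cases r <;> interval_cases r' <;> simp_all [qbr_neg, qbr_one hh]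
  · have h0 := hL i hi j hj hij 0 (by simp)
    have h1 := hL i hi j hj hij 1 (by simp)
    interval_cases r <;> interval_cases r' <;> ring_nf at h0 h1 ⊢ <;> tauto

/-- Identity (24d).  `L1 i` stands for `L_{i,2k+1}`, `L0 j` for `L_{j,2k}` and
`Lm i` for `L_{i,2k-1}`. -/
theorem identity_24d (h : ℂ) (hh : Complex.exp h ≠ 1) (k : ℤ) (hk : 1 ≤ k)
    (l p : ℤ) (hl : l ∈ Finset.Icc (-k) k) (hp : p ∈ Finset.Icc (-k) k)
    (hlp : l ≠ p) (L1 L0 Lm : ℤ → ℂ)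
    (hL0 : ∀ i ∈ Finset.Icc (-k) (k - 1), ∀ j ∈ Finset.Icc (-k) (k - 1), i ≠ j →
      ∀ s ∈ Finset.range 2,
        qbr h (L0 i - L0 j + (s : ℂ)) ≠ 0 ∧ qbr h (L0 i - L0 j + (s : ℂ) - 1) ≠ 0) :
    ∑ s ∈ Finset.range 2, ∑ j ∈ Finset.Icc (-k) (k - 1), (-1 : ℂ) ^ s *
      ((∏ i ∈ ((Finset.Icc (-k) k).erase l).erase p, qbr h (L1 i - L0 j + (s : ℂ))) *
        ∏ i ∈ Finset.Icc (1 - k) (k - 1), qbr h (Lm i - L0 j + (s : ℂ))) /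
      ∏ i ∈ (Finset.Icc (-k) (k - 1)).erase j,
        qbr h (L0 i - L0 j + (s : ℂ)) * qbr h (L0 i - L0 j + (s : ℂ) - 1) = 0 := by
  set u := (((Icc (-k) k).erase l).erase p).disjSum (Icc (1 - k) (k - 1))
  set t := range 2 ×ˢ Icc (-k) (k - 1)
  have hcard : #u + 2 = #t := by
    rw [card_disjSum, card_erase_of_mem (mem_erase.2 ⟨hlp.symm, hp⟩), card_erase_of_mem hl,
      card_product, card_range, Int.card_Icc, Int.card_Icc, Int.card_Icc]
    omega
  rw [← sum_product', ← neg_eq_zero,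
    ← sum_prod_qbr_div_prod_qbr_eq_zero hh (qbr_sub_ne_zero_of_mem_range_two_product hh hL0)
      (Sum.elim L1 Lm) hcard, ← sum_neg_distrib]
  refine sum_congr rfl fun ⟨s, j⟩ hν => ?_
  obtain ⟨hs, hj⟩ := mem_product.1 hν
  rw [neg_one_pow_mul_div_prod_qbr_eq_neg_div hh (mem_range.1 hs) hj, neg_neg, prod_disjSum]
  simp [sub_sub_eq_add_sub, add_sub_right_comm]
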